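/- The function J_R is twice continuously differentiable on (0,∞) and satisfies the ordinary differential equation (θ²/2)y²J_R″(y) + (δ−r)yJ_R′(y) − δJ_R(y) + ũ(y) = 0 for every y > 0. -/

import Mathlib

open MeasureTheory Set Filter Topology

/-!
The convex dual `utld` of the concave utility `u` has `-I` as a subgradient (tangent-line
inequality for `u` at `I b`); as `I` is continuous, this makes `utld` differentiable with
derivative `-I`. Near `0`, integrating `η ^ (-n₂ - 1) * (utld η - utld y)` by parts against
`η ^ (-n₂) / (-n₂)` trades it for the assumed integrability of `η ^ (-n₂) * I η`; near `∞`,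
`utld` is bounded between `u 0` and `utld y`. Both integrals in `J_R` are then differentiable
in `y`, and `J_R` is the variation-of-parameters solution of the Euler equation whose indicial
roots are `n₁` and `n₂`: the `utld` terms cancel in `J_R'` and leave exactly `-utld y` in the
equation.
-/

theorem ConcaveOn.le_add_mul_sub_of_hasDerivAt {f : ℝ → ℝ} {s : Set ℝ} {x c f' : ℝ}
    (hf : ConcaveOn ℝ s f) (hx : x ∈ s) (hc : c ∈ s) (hd : HasDerivAt f f' c) :
    f x ≤ f c + f' * (x - c) := by
  rcases lt_trichotomy x c with hxc | rfl | hcx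
  · have h := hf.le_slope_of_hasDerivAt hx hc hxc hd
    rw [slope_def_field, le_div_iff₀ (sub_pos.mpr hxc)] at h
    linarith
  · simp
  · have h := hf.slope_le_of_hasDerivAt hc hx hcx hd
    rw [slope_def_field, div_le_iff₀ (sub_pos.mpr hcx)] at h
    linarith

theorem hasDerivAt_of_forall_add_mul_sub_le {f g : ℝ → ℝ} {s : Set ℝ} {y : ℝ} (hs : s ∈ 𝓝 y)
    (hfg : ∀ a ∈ s, ∀ b ∈ s, f a + g a * (b - a) ≤ f b) (hg : ContinuousAt g y) :
    HasDerivAt f (g y) y := by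
  rw [hasDerivAt_iff_tendsto_slope]
  have hmin : Tendsto (fun t => min (g y) (g t)) (𝓝[≠] y) (𝓝 (g y)) := by
    simpa only [min_self] using
      ((tendsto_const_nhds (x := g y)).min hg).mono_left nhdsWithin_le_nhds
  have hmax : Tendsto (fun t => max (g y) (g t)) (𝓝[≠] y) (𝓝 (g y)) := by
    simpa only [max_self] using
      ((tendsto_const_nhds (x := g y)).max hg).mono_left nhdsWithin_le_nhds
  have hbounds : ∀ᶠ t in 𝓝[≠] y,
      min (g y) (g t) ≤ slope f y t ∧ slope f y t ≤ max (g y) (g t) := by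
    filter_upwards [self_mem_nhdsWithin, mem_nhdsWithin_of_mem_nhds hs] with t hty ht
    have hlow := hfg y (mem_of_mem_nhds hs) t ht
    have hupp := hfg t ht y (mem_of_mem_nhds hs)
    rw [slope_def_field]
    rcases lt_or_gt_of_ne (show t ≠ y from hty) with hlt | hgt
    · have hneg : t - y < 0 := sub_neg.mpr hlt
      refine ⟨min_le_of_right_le ?_, le_max_of_le_left ?_⟩
      · rw [le_div_iff_of_neg hneg]; linarith
      · rw [div_le_iff_of_neg hneg]; linarith
    · have hpos : 0 < t - y := sub_pos.mpr hgt
      refine ⟨min_le_of_left_le ?_, le_max_of_le_right ?_⟩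
      · rw [le_div_iff₀ hpos]; linarith
      · rw [div_le_iff₀ hpos]; linarith
  exact tendsto_of_tendsto_of_tendsto_of_le_of_le' hmin hmax
    (hbounds.mono fun _ h => h.1) (hbounds.mono fun _ h => h.2)

theorem dual_add_neg_mul_sub_le {u u' I utld : ℝ → ℝ} (hu_conc : ConcaveOn ℝ (Ici 0) u)
    (hu_deriv : ∀ c : ℝ, 0 < c → HasDerivAt u (u' c) c) (hI_pos : ∀ y : ℝ, 0 < y → 0 < I y)
    (hI_left : ∀ y : ℝ, 0 < y → u' (I y) = y)
    (hutld : ∀ y : ℝ, 0 < y → utld y = u (I y) - y * I y) {a b : ℝ} (ha : 0 < a) (hb : 0 < b) :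
    utld a + -I a * (b - a) ≤ utld b := by
  have h := hu_conc.le_add_mul_sub_of_hasDerivAt (mem_Ici.mpr (hI_pos a ha).le)
    (mem_Ici.mpr (hI_pos b hb).le) (hu_deriv _ (hI_pos b hb))
  rw [hI_left b hb] at h
  rw [hutld a ha, hutld b hb]
  nlinarith

theorem le_dual {u u' I utld : ℝ → ℝ} (hu_conc : ConcaveOn ℝ (Ici 0) u)
    (hu_deriv : ∀ c : ℝ, 0 < c → HasDerivAt u (u' c) c) (hI_pos : ∀ y : ℝ, 0 < y → 0 < I y)
    (hI_left : ∀ y : ℝ, 0 < y → u' (I y) = y)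
    (hutld : ∀ y : ℝ, 0 < y → utld y = u (I y) - y * I y) {y : ℝ} (hy : 0 < y) :
    u 0 ≤ utld y := by
  have h := hu_conc.le_add_mul_sub_of_hasDerivAt self_mem_Ici
    (mem_Ici.mpr (hI_pos y hy).le) (hu_deriv _ (hI_pos y hy))
  rw [hI_left y hy] at h
  rw [hutld y hy]
  linarith

theorem hasDerivAt_integral_Ioo_right {f : ℝ → ℝ} {a b : ℝ} (hab : a < b)
    (hf : IntegrableOn f (Ioo a b)) (hcont : ContinuousOn f (Ioi a)) :
    HasDerivAt (fun t => ∫ x in Ioo a t, f x) (f b) b := by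
  have hii : IntervalIntegrable f volume a b :=
    (intervalIntegrable_iff_integrableOn_Ioo_of_le hab.le).mpr hf
  refine (intervalIntegral.integral_hasDerivAt_right hii
    (hcont.stronglyMeasurableAtFilter isOpen_Ioi b hab)
    (hcont.continuousAt (Ioi_mem_nhds hab))).congr_of_eventuallyEq ?_
  filter_upwards [Ioi_mem_nhds hab] with t ht
  rw [intervalIntegral.integral_of_le (le_of_lt ht), integral_Ioc_eq_integral_Ioo]

theorem hasDerivAt_integral_Ioi {f : ℝ → ℝ} {a b : ℝ} (hab : a < b)
    (hf : IntegrableOn f (Ioi a)) (hcont : ContinuousOn f (Ioi a)) :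
    HasDerivAt (fun t => ∫ x in Ioi t, f x) (-f b) b := by
  refine ((intervalIntegral.integral_hasDerivAt_left (b := b) IntervalIntegrable.refl
    (hcont.stronglyMeasurableAtFilter isOpen_Ioi b hab)
    (hcont.continuousAt (Ioi_mem_nhds hab))).add_const
      (∫ x in Ioi b, f x)).congr_of_eventuallyEq ?_
  filter_upwards [Ioi_mem_nhds hab] with t ht
  exact (intervalIntegral.integral_interval_add_Ioi (hf.mono_set (Ioi_subset_Ioi ht.le))
    (hf.mono_set (Ioi_subset_Ioi hab.le))).symm

theorem integrableOn_Ioi_rpow_mul_of_norm_le {φ : ℝ → ℝ} {q y M : ℝ} (hq : q < -1)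
    (hy : 0 < y) (hφ : ContinuousOn φ (Ioi y)) (hbdd : ∀ η ∈ Ioi y, ‖φ η‖ ≤ M) :
    IntegrableOn (fun η => η ^ q * φ η) (Ioi y) :=
  (integrableOn_Ioi_rpow_of_lt hq hy).mul_bdd (hφ.aestronglyMeasurable measurableSet_Ioi)
    ((ae_restrict_iff' measurableSet_Ioi).mpr (ae_of_all _ hbdd))

theorem intervalIntegral_rpow_sub_one_mul_sub_le {φ ψ : ℝ → ℝ} {p ε y : ℝ} (hp : 0 < p)
    (hε : 0 < ε) (hεy : ε ≤ y) (hφ : ∀ η ∈ Icc ε y, HasDerivAt φ (-ψ η) η)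
    (hψ : ContinuousOn ψ (Icc ε y)) (hφεy : φ y ≤ φ ε) :
    ∫ η in ε..y, η ^ (p - 1) * (φ η - φ y) ≤ (∫ η in ε..y, η ^ p * ψ η) / p := by
  have hpos : Icc ε y ⊆ Ioi 0 := fun η hη => hε.trans_le hη.1
  have hIcc : uIcc ε y = Icc ε y := uIcc_of_le hεy
  have hpow : ∀ η ∈ uIcc ε y, HasDerivAt (fun x : ℝ => x ^ p / p) (η ^ (p - 1)) η :=
    fun η hη => ((Real.hasDerivAt_rpow_const (p := p) (Or.inl (hpos (hIcc ▸ hη)).ne')).div_const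
      p).congr_deriv (by field_simp)
  have hibp := intervalIntegral.integral_mul_deriv_eq_deriv_mul
    (u := fun η => φ η - φ y) (v := fun x : ℝ => x ^ p / p)
    (fun η hη => (hφ η (hIcc ▸ hη)).sub_const (φ y)) hpow
    (hψ.neg.intervalIntegrable_of_Icc hεy)
    ((continuousOn_id.rpow_const fun η hη => Or.inl (hpos (hIcc ▸ hη)).ne').intervalIntegrable)
  have hboundary : 0 ≤ (φ ε - φ y) * (ε ^ p / p) :=
    mul_nonneg (sub_nonneg.mpr hφεy) (div_nonneg (Real.rpow_nonneg hε.le p) hp.le)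
  have hrest : -∫ η in ε..y, -ψ η * (η ^ p / p) = (∫ η in ε..y, η ^ p * ψ η) / p := by
    rw [← intervalIntegral.integral_neg, ← intervalIntegral.integral_div]
    congr 1; ext η; ring
  calc ∫ η in ε..y, η ^ (p - 1) * (φ η - φ y)
      = ∫ η in ε..y, (φ η - φ y) * η ^ (p - 1) := by congr 1; ext η; ring
    _ = -((φ ε - φ y) * (ε ^ p / p)) - ∫ η in ε..y, -ψ η * (η ^ p / p) := by
      rw [hibp]; ring
    _ ≤ (∫ η in ε..y, η ^ p * ψ η) / p := by linarith

theorem integrableOn_Ioo_rpow_sub_one_mul {φ ψ : ℝ → ℝ} {p y : ℝ} (hp : 0 < p) (hy : 0 < y)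
    (hφ : ∀ η, 0 < η → HasDerivAt φ (-ψ η) η) (hψ : ContinuousOn ψ (Ioi 0))
    (hψ0 : ∀ η, 0 < η → 0 ≤ ψ η) (hint : IntegrableOn (fun η => η ^ p * ψ η) (Ioo 0 y)) :
    IntegrableOn (fun η => η ^ (p - 1) * φ η) (Ioo 0 y) := by
  have hφc : ContinuousOn φ (Ioi 0) := fun η hη => (hφ η hη).continuousAt.continuousWithinAt
  have hanti : AntitoneOn φ (Ioi 0) := by
    refine antitoneOn_of_hasDerivWithinAt_nonpos (convex_Ioi 0) hφc (fun η hη => ?_)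
      (fun η hη => neg_nonpos.mpr (hψ0 η (interior_subset hη)))
    exact (hφ η (interior_subset hη)).hasDerivWithinAt
  have hpow : ContinuousOn (fun η : ℝ => η ^ (p - 1)) (Ioi 0) :=
    ContinuousOn.rpow_const continuousOn_id fun η hη => Or.inl (ne_of_gt hη)
  set h : ℝ → ℝ := fun η => η ^ (p - 1) * (φ η - φ y)
  have hh : ContinuousOn h (Ioi 0) := hpow.mul (hφc.sub continuousOn_const)
  have hbound : ∀ ε ∈ Ioc 0 y, ∫ η in Ioc ε y, ‖h η‖ ≤ (∫ η in Ioo 0 y, η ^ p * ψ η) / p := by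
    rintro ε ⟨hε, hεy⟩
    have hpos : Icc ε y ⊆ Ioi 0 := fun η hη => hε.trans_le hη.1
    calc ∫ η in Ioc ε y, ‖h η‖ = ∫ η in ε..y, h η := by
          rw [intervalIntegral.integral_of_le hεy]
          refine setIntegral_congr_fun measurableSet_Ioc fun η hη => Real.norm_of_nonneg ?_
          exact mul_nonneg (Real.rpow_nonneg (hε.trans hη.1).le _)
            (sub_nonneg.mpr (hanti (hε.trans hη.1) hy hη.2))
      _ ≤ (∫ η in ε..y, η ^ p * ψ η) / p :=
          intervalIntegral_rpow_sub_one_mul_sub_le hp hε hεy (fun η hη => hφ η (hpos hη))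
            (hψ.mono hpos) (hanti hε hy hεy)
      _ ≤ (∫ η in Ioo 0 y, η ^ p * ψ η) / p := by
          gcongr
          rw [intervalIntegral.integral_of_le hεy, integral_Ioc_eq_integral_Ioo]
          refine setIntegral_mono_set hint ?_ (Ioo_subset_Ioo_left hε.le).eventuallyLE
          filter_upwards [ae_restrict_mem measurableSet_Ioo] with η hη
          exact mul_nonneg (Real.rpow_nonneg hη.1.le _) (hψ0 η hη.1)
  have hε : Tendsto (fun n : ℕ => y * (1 / (n + 1))) atTop (𝓝 0) := by
    simpa using tendsto_one_div_add_atTop_nhds_zero_nat.const_mul y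
  have hεmem : ∀ n : ℕ, y * (1 / (n + 1)) ∈ Ioc 0 y := fun n =>
    ⟨by positivity, mul_le_of_le_one_right hy.le (div_le_one_of_le₀ (by simp) (by positivity))⟩
  have hhint : IntegrableOn h (Ioc 0 y) :=
    integrableOn_Ioc_of_intervalIntegral_norm_bounded_left
      (fun n => (hh.mono fun η hη => (hεmem n).1.trans_le hη.1).integrableOn_Icc.mono_set
        Ioc_subset_Icc_self) hε (Eventually.of_forall fun n => hbound _ (hεmem n))
  have hpowint : IntegrableOn (fun η : ℝ => η ^ (p - 1)) (Ioo 0 y) :=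
    (intervalIntegral.integrableOn_Ioo_rpow_iff hy).mpr (by linarith)
  refine ((hhint.mono_set Ioo_subset_Ioc_self).add (hpowint.mul_const (φ y))).congr_fun
    (fun η _ => ?_) measurableSet_Ioo
  simp only [Pi.add_apply, h]
  ring

theorem euler_variation_of_parameters {a b c C n₁ n₂ : ℝ}
    (h₁ : a * n₁ ^ 2 + (b - a) * n₁ - c = 0) (h₂ : a * n₂ ^ 2 + (b - a) * n₂ - c = 0)
    (hC : C * (a * (n₁ - n₂)) = 1) {g F G J : ℝ → ℝ} (hg : ContinuousOn g (Ioi 0))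
    (hF : ∀ y, 0 < y → HasDerivAt F (y ^ (-n₂ - 1) * g y) y)
    (hG : ∀ y, 0 < y → HasDerivAt G (-(y ^ (-n₁ - 1) * g y)) y)
    (hJ : ∀ y, 0 < y → J y = C * (y ^ n₂ * F y + y ^ n₁ * G y)) :
    ∃ J' J'' : ℝ → ℝ,
      (∀ y, 0 < y → HasDerivAt J (J' y) y) ∧
      (∀ y, 0 < y → HasDerivAt J' (J'' y) y) ∧
      ContinuousOn J' (Ioi 0) ∧
      ContinuousOn J'' (Ioi 0) ∧
      ∀ y, 0 < y → a * y ^ 2 * J'' y + b * y * J' y - c * J y + g y = 0 := by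
  have hrpow : ∀ y : ℝ, 0 < y → ∀ n : ℝ, y ^ (-n - 1) = (y ^ n * y)⁻¹ := fun y hy n => by
    rw [show -n - 1 = -(n + 1) by ring, Real.rpow_neg hy.le, Real.rpow_add_one hy.ne']
  have hpow : ∀ y : ℝ, 0 < y → ∀ n : ℝ, HasDerivAt (fun t : ℝ => t ^ n) (n * (y ^ n / y)) y :=
    fun y hy n => by
      simpa only [Real.rpow_sub_one hy.ne'] using
        Real.hasDerivAt_rpow_const (p := n) (Or.inl hy.ne')
  have hFc : ContinuousOn F (Ioi 0) := fun y hy => (hF y hy).continuousAt.continuousWithinAt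
  have hGc : ContinuousOn G (Ioi 0) := fun y hy => (hG y hy).continuousAt.continuousWithinAt
  set J' : ℝ → ℝ := fun y => C * (n₂ * y ^ n₂ * F y + n₁ * y ^ n₁ * G y) / y
  set J'' : ℝ → ℝ := fun y =>
    C * (n₂ * (n₂ - 1) * y ^ n₂ * F y + n₁ * (n₁ - 1) * y ^ n₁ * G y + (n₂ - n₁) * g y) / y ^ 2
  have hJ'_deriv : ∀ y : ℝ, 0 < y → HasDerivAt J' (J'' y) y := by
    intro y hy
    have hd := ((((hpow y hy n₂).const_mul n₂).mul (hF y hy)).add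
      (((hpow y hy n₁).const_mul n₁).mul (hG y hy))).const_mul C |>.div (hasDerivAt_id y) hy.ne'
    refine hd.congr_deriv ?_
    rw [hrpow y hy n₁, hrpow y hy n₂]
    have : y ^ n₁ ≠ 0 := (Real.rpow_pos_of_pos hy n₁).ne'
    have : y ^ n₂ ≠ 0 := (Real.rpow_pos_of_pos hy n₂).ne'
    simp only [J'', id, Pi.add_apply, Pi.mul_apply]
    field_simp
    ring
  refine ⟨J', J'', fun y hy => ?_, hJ'_deriv, fun y hy => (hJ'_deriv y hy).continuousAt.continuousWithinAt,
    ?_, fun y hy => ?_⟩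
  · have hd := (((hpow y hy n₂).mul (hF y hy)).add ((hpow y hy n₁).mul (hG y hy))).const_mul C
    refine (hd.congr_deriv ?_).congr_of_eventuallyEq
      (eventually_of_mem (Ioi_mem_nhds hy) fun t ht => hJ t ht)
    rw [hrpow y hy n₁, hrpow y hy n₂]
    have : y ^ n₁ ≠ 0 := (Real.rpow_pos_of_pos hy n₁).ne'
    have : y ^ n₂ ≠ 0 := (Real.rpow_pos_of_pos hy n₂).ne'
    simp only [J']
    field_simp
    ring
  · have hrpow_cont : ∀ n : ℝ, ContinuousOn (fun y : ℝ => y ^ n) (Ioi 0) := fun n =>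
      continuousOn_id.rpow_const fun y hy => Or.inl (ne_of_gt hy)
    have := hrpow_cont n₁
    have := hrpow_cont n₂
    exact ContinuousOn.div (by fun_prop) (by fun_prop) fun y hy => pow_ne_zero 2 (ne_of_gt hy)
  · rw [hJ y hy]
    simp only [J', J'']
    field_simp
    linear_combination (C * y ^ n₂ * F y) * h₂ + (C * y ^ n₁ * G y) * h₁ - g y * hC

theorem stmt_13_general
    (δ r θ n₁ n₂ : ℝ)
    (hθ : θ ≠ 0)
    (hn₂0 : n₂ < 0) (hn₁1 : 1 < n₁)
    (hroot₁ : θ ^ 2 / 2 * n₁ ^ 2 + (δ - r - θ ^ 2 / 2) * n₁ - δ = 0)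
    (hroot₂ : θ ^ 2 / 2 * n₂ ^ 2 + (δ - r - θ ^ 2 / 2) * n₂ - δ = 0)
    (u u' I utld : ℝ → ℝ)
    (hu_conc : StrictConcaveOn ℝ (Set.Ici 0) u)
    (hu_deriv : ∀ c : ℝ, 0 < c → HasDerivAt u (u' c) c)
    (hI_pos : ∀ y : ℝ, 0 < y → 0 < I y)
    (hI_left : ∀ y : ℝ, 0 < y → u' (I y) = y)
    (hI_cont : ContinuousOn I (Set.Ioi 0))
    (hutld : ∀ y : ℝ, 0 < y → utld y = u (I y) - y * I y)
    (hI_int : ∀ y : ℝ, 0 < y →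
      MeasureTheory.IntegrableOn (fun η => η ^ (-n₂) * I η) (Set.Ioo 0 y) MeasureTheory.volume)
    (J_R : ℝ → ℝ)
    (hJR : ∀ y : ℝ, 0 < y → J_R y = (2 / (θ ^ 2 * (n₁ - n₂))) *
      (y ^ n₂ * (∫ η in Set.Ioo 0 y, η ^ (-n₂ - 1) * utld η) +
       y ^ n₁ * ∫ η in Set.Ioi y, η ^ (-n₁ - 1) * utld η))
    :
    ∃ J' J'' : ℝ → ℝ,
      (∀ y : ℝ, 0 < y → HasDerivAt J_R (J' y) y) ∧
      (∀ y : ℝ, 0 < y → HasDerivAt J' (J'' y) y) ∧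
      ContinuousOn J' (Set.Ioi 0) ∧
      ContinuousOn J'' (Set.Ioi 0) ∧
      ∀ y : ℝ, 0 < y →
        θ ^ 2 / 2 * y ^ 2 * J'' y + (δ - r) * y * J' y - δ * J_R y + utld y = 0 := by
  have hsubgrad : ∀ a ∈ Ioi (0 : ℝ), ∀ b ∈ Ioi (0 : ℝ), utld a + -I a * (b - a) ≤ utld b :=
    fun a ha b hb => dual_add_neg_mul_sub_le hu_conc.concaveOn hu_deriv hI_pos hI_left hutld ha hb
  have hderiv : ∀ y : ℝ, 0 < y → HasDerivAt utld (-I y) y := fun y hy =>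
    hasDerivAt_of_forall_add_mul_sub_le (Ioi_mem_nhds hy) hsubgrad
      (hI_cont.continuousAt (Ioi_mem_nhds hy)).neg
  have hanti : AntitoneOn utld (Ioi 0) := fun a ha b hb hab => by
    nlinarith [hsubgrad b hb a ha, hI_pos b hb]
  have hcont : ContinuousOn utld (Ioi 0) := fun y hy =>
    (hderiv y hy).continuousAt.continuousWithinAt
  have hcont_mul : ∀ p : ℝ, ContinuousOn (fun η : ℝ => η ^ p * utld η) (Ioi 0) := fun p =>
    (continuousOn_id.rpow_const fun η hη => Or.inl (ne_of_gt hη)).mul hcont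
  have hint_Ioo : ∀ y : ℝ, 0 < y → IntegrableOn (fun η => η ^ (-n₂ - 1) * utld η) (Ioo 0 y) :=
    fun y hy => integrableOn_Ioo_rpow_sub_one_mul (by linarith) hy hderiv hI_cont
      (fun η hη => (hI_pos η hη).le) (hI_int y hy)
  have hint_Ioi : ∀ y : ℝ, 0 < y → IntegrableOn (fun η => η ^ (-n₁ - 1) * utld η) (Ioi y) :=
    fun y hy => integrableOn_Ioi_rpow_mul_of_norm_le (by linarith) hy
      (hcont.mono (Ioi_subset_Ioi hy.le)) fun η hη => abs_le_max_abs_abs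
        (le_dual hu_conc.concaveOn hu_deriv hI_pos hI_left hutld (hy.trans hη))
        (hanti hy (hy.trans hη) (le_of_lt hη))
  refine euler_variation_of_parameters (a := θ ^ 2 / 2) (b := δ - r) (c := δ) hroot₁ hroot₂
    ?_ hcont (fun y hy => hasDerivAt_integral_Ioo_right hy (hint_Ioo y hy) (hcont_mul _))
    (fun y hy => hasDerivAt_integral_Ioi (half_lt_self hy) (hint_Ioi _ (half_pos hy))
      ((hcont_mul _).mono (Ioi_subset_Ioi (half_pos hy).le))) hJR
  have : n₁ - n₂ ≠ 0 := by linarith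
  field_simp

/-- J_R is twice continuously differentiable on (0,∞) and satisfies
(θ²/2)y²J_R″(y) + (δ−r)yJ_R′(y) − δJ_R(y) + ũ(y) = 0 for every y > 0. -/
theorem stmt_13
    (δ r θ n₁ n₂ : ℝ)
    (hδ : 0 < δ) (hr : 0 < r) (hθ : θ ≠ 0)
    (hn₂0 : n₂ < 0) (hn₁1 : 1 < n₁)
    (hroot₁ : θ ^ 2 / 2 * n₁ ^ 2 + (δ - r - θ ^ 2 / 2) * n₁ - δ = 0)
    (hroot₂ : θ ^ 2 / 2 * n₂ ^ 2 + (δ - r - θ ^ 2 / 2) * n₂ - δ = 0)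
    (u u' I utld : ℝ → ℝ)
    (hu_mono : StrictMonoOn u (Set.Ici 0))
    (hu_conc : StrictConcaveOn ℝ (Set.Ici 0) u)
    (hu_cont : ContinuousOn u (Set.Ici 0))
    (hu_deriv : ∀ c : ℝ, 0 < c → HasDerivAt u (u' c) c)
    (hu'_cont : ContinuousOn u' (Set.Ioi 0))
    (hu'_top : Filter.Tendsto u' Filter.atTop (nhds 0))
    (hu'_zero : Filter.Tendsto u' (nhdsWithin 0 (Set.Ioi 0)) Filter.atTop)
    (hI_pos : ∀ y : ℝ, 0 < y → 0 < I y)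
    (hI_left : ∀ y : ℝ, 0 < y → u' (I y) = y)
    (hI_right : ∀ c : ℝ, 0 < c → I (u' c) = c)
    (hI_anti : StrictAntiOn I (Set.Ioi 0))
    (hI_cont : ContinuousOn I (Set.Ioi 0))
    (hI_zero : Filter.Tendsto I (nhdsWithin 0 (Set.Ioi 0)) Filter.atTop)
    (hI_top : Filter.Tendsto I Filter.atTop (nhds 0))
    (hutld : ∀ y : ℝ, 0 < y → utld y = u (I y) - y * I y)
    (hI_int : ∀ y : ℝ, 0 < y →
      MeasureTheory.IntegrableOn (fun η => η ^ (-n₂) * I η) (Set.Ioo 0 y) MeasureTheory.volume)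
    (J_R : ℝ → ℝ)
    (hJR : ∀ y : ℝ, 0 < y → J_R y = (2 / (θ ^ 2 * (n₁ - n₂))) *
      (y ^ n₂ * (∫ η in Set.Ioo 0 y, η ^ (-n₂ - 1) * utld η) +
       y ^ n₁ * ∫ η in Set.Ioi y, η ^ (-n₁ - 1) * utld η))
    :
    ∃ J' J'' : ℝ → ℝ,
      (∀ y : ℝ, 0 < y → HasDerivAt J_R (J' y) y) ∧
      (∀ y : ℝ, 0 < y → HasDerivAt J' (J'' y) y) ∧
      ContinuousOn J' (Set.Ioi 0) ∧
      ContinuousOn J'' (Set.Ioi 0) ∧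
      ∀ y : ℝ, 0 < y →
        θ ^ 2 / 2 * y ^ 2 * J'' y + (δ - r) * y * J' y - δ * J_R y + utld y = 0 :=
  stmt_13_general δ r θ n₁ n₂ hθ hn₂0 hn₁1 hroot₁ hroot₂ u u' I utld hu_conc hu_deriv hI_pos hI_left
    hI_cont hutld hI_int J_R hJR
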